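/- Let (r, Ω², φ, e) be a smooth solution of the spherically symmetric Einstein–Maxwell–scalar field system on an open set U ⊆ ℝ² with ν := ∂_u r and λ := ∂_v r nowhere zero, and let σ : U → ℝ be a C² function. Then the Kodama energy current identity ∂_u(κ⁻¹ r² (∂_v φ)² + ∂_v(σ φ²)) + ∂_v(−γ⁻¹ r² (∂_u φ)² − ∂_u(σ φ²)) = 0 holds on U, where κ⁻¹ = −4ν/Ω² and γ⁻¹ = −4λ/Ω²; in particular the energy current generated by the Kodama vector field is divergence-free. -/

import Mathlib

noncomputable section

/-- Partial derivative in the ingoing null direction `u` (the first coordinate of `ℝ²`). -/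
def pu (f : ℝ × ℝ → ℝ) (p : ℝ × ℝ) : ℝ := fderiv ℝ f p (1, 0)

/-- Partial derivative in the outgoing null direction `v` (the second coordinate of `ℝ²`). -/
def pv (f : ℝ × ℝ → ℝ) (p : ℝ × ℝ) : ℝ := fderiv ℝ f p (0, 1)

/-- The Hawking mass `m = (r/2)(1 + 4νλ/Ω²)`, where `ν = ∂_u r` and `λ = ∂_v r`. -/
def hawkingMass (r Ω2 : ℝ × ℝ → ℝ) (p : ℝ × ℝ) : ℝ :=
  r p / 2 * (1 + 4 * pu r p * pv r p / Ω2 p)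

/-- The renormalized Hawking mass `ϖ = m + e²/(2r)`. -/
def varpi (r Ω2 : ℝ × ℝ → ℝ) (e : ℝ) (p : ℝ × ℝ) : ℝ :=
  hawkingMass r Ω2 p + e ^ 2 / (2 * r p)

/-- The mass aspect function `μ = 2m/r`. -/
def muQ (r Ω2 : ℝ × ℝ → ℝ) (p : ℝ × ℝ) : ℝ := 2 * hawkingMass r Ω2 p / r p

/-- `κ = -Ω²/(4ν)`. -/
def kap (r Ω2 : ℝ × ℝ → ℝ) (p : ℝ × ℝ) : ℝ := -Ω2 p / (4 * pu r p)

/-- `γ = -Ω²/(4λ)`. -/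
def gam (r Ω2 : ℝ × ℝ → ℝ) (p : ℝ × ℝ) : ℝ := -Ω2 p / (4 * pv r p)

/-- The redshift factor `𝜘 = r⁻²(ϖ - e²/r)`. -/
def redshift (r Ω2 : ℝ × ℝ → ℝ) (e : ℝ) (p : ℝ × ℝ) : ℝ :=
  (varpi r Ω2 e p - e ^ 2 / r p) / r p ^ 2

section Helpers

variable {f g : ℝ × ℝ → ℝ} {p : ℝ × ℝ} {U : Set (ℝ × ℝ)}

lemma pu_add (hf : DifferentiableAt ℝ f p) (hg : DifferentiableAt ℝ g p) :
    pu (fun q => f q + g q) p = pu f p + pu g p := by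
  simp [pu, fderiv_fun_add hf hg]

lemma pv_sub (hf : DifferentiableAt ℝ f p) (hg : DifferentiableAt ℝ g p) :
    pv (fun q => f q - g q) p = pv f p - pv g p := by
  simp [pv, fderiv_fun_sub hf hg]

lemma pu_mul (hf : DifferentiableAt ℝ f p) (hg : DifferentiableAt ℝ g p) :
    pu (fun q => f q * g q) p = pu f p * g p + f p * pu g p := by
  simp [pu, fderiv_fun_mul hf hg, smul_eq_mul]; ring

lemma pv_mul (hf : DifferentiableAt ℝ f p) (hg : DifferentiableAt ℝ g p) :
    pv (fun q => f q * g q) p = pv f p * g p + f p * pv g p := by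
  simp [pv, fderiv_fun_mul hf hg, smul_eq_mul]; ring

lemma pu_sq (hf : DifferentiableAt ℝ f p) :
    pu (fun q => f q ^ 2) p = 2 * f p * pu f p := by
  have h : (fun q => f q ^ 2) = fun q => f q * f q := by funext q; ring
  rw [h, pu_mul hf hf]; ring

lemma pv_sq (hf : DifferentiableAt ℝ f p) :
    pv (fun q => f q ^ 2) p = 2 * f p * pv f p := by
  have h : (fun q => f q ^ 2) = fun q => f q * f q := by funext q; ring
  rw [h, pv_mul hf hf]; ring

lemma pu_const_mul (hf : DifferentiableAt ℝ f p) (c : ℝ) :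
    pu (fun q => c * f q) p = c * pu f p := by
  simp [pu, fderiv_const_mul hf c]

lemma pv_const_mul (hf : DifferentiableAt ℝ f p) (c : ℝ) :
    pv (fun q => c * f q) p = c * pv f p := by
  simp [pv, fderiv_const_mul hf c]

lemma pu_pv_eq (hf : DifferentiableAt ℝ (fderiv ℝ f) p) :
    pu (pv f) p = fderiv ℝ (fderiv ℝ f) p (1, 0) (0, 1) := by
  have h : pv f = fun q =>
      (ContinuousLinearMap.apply ℝ ℝ (((0 : ℝ), (1 : ℝ)))) (fderiv ℝ f q) := rfl
  rw [pu, h, show (fun q => (ContinuousLinearMap.apply ℝ ℝ (((0 : ℝ), (1 : ℝ)))) (fderiv ℝ f q))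
      = (ContinuousLinearMap.apply ℝ ℝ (((0 : ℝ), (1 : ℝ)))) ∘ fderiv ℝ f from rfl,
    (((ContinuousLinearMap.apply ℝ ℝ (((0 : ℝ), (1 : ℝ))))).hasFDerivAt.comp p
      hf.hasFDerivAt).fderiv]
  rfl

lemma pv_pu_eq (hf : DifferentiableAt ℝ (fderiv ℝ f) p) :
    pv (pu f) p = fderiv ℝ (fderiv ℝ f) p (0, 1) (1, 0) := by
  have h : pu f = fun q =>
      (ContinuousLinearMap.apply ℝ ℝ (((1 : ℝ), (0 : ℝ)))) (fderiv ℝ f q) := rfl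
  rw [pv, h, show (fun q => (ContinuousLinearMap.apply ℝ ℝ (((1 : ℝ), (0 : ℝ)))) (fderiv ℝ f q))
      = (ContinuousLinearMap.apply ℝ ℝ (((1 : ℝ), (0 : ℝ)))) ∘ fderiv ℝ f from rfl,
    (((ContinuousLinearMap.apply ℝ ℝ (((1 : ℝ), (0 : ℝ))))).hasFDerivAt.comp p
      hf.hasFDerivAt).fderiv]
  rfl

lemma schwarz (hf : ContDiffAt ℝ 2 f p) : pu (pv f) p = pv (pu f) p := by
  have hd : DifferentiableAt ℝ (fderiv ℝ f) p :=
    (hf.fderiv_right (m := 1) (by norm_num)).differentiableAt one_ne_zero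
  rw [pu_pv_eq hd, pv_pu_eq hd]
  exact hf.isSymmSndFDerivAt (by simp) (1, 0) (0, 1)

lemma pu_contDiffOn (hU : IsOpen U) (hf : ContDiffOn ℝ 2 f U) :
    ContDiffOn ℝ 1 (pu f) U :=
  (hf.fderiv_of_isOpen hU le_rfl).clm_apply contDiffOn_const

lemma pv_contDiffOn (hU : IsOpen U) (hf : ContDiffOn ℝ 2 f U) :
    ContDiffOn ℝ 1 (pv f) U :=
  (hf.fderiv_of_isOpen hU le_rfl).clm_apply contDiffOn_const

lemma pu_diffAt (hU : IsOpen U) (hp : p ∈ U) (hf : ContDiffOn ℝ 2 f U) :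
    DifferentiableAt ℝ (pu f) p :=
  ((pu_contDiffOn hU hf).differentiableOn one_ne_zero).differentiableAt (hU.mem_nhds hp)

lemma pv_diffAt (hU : IsOpen U) (hp : p ∈ U) (hf : ContDiffOn ℝ 2 f U) :
    DifferentiableAt ℝ (pv f) p :=
  ((pv_contDiffOn hU hf).differentiableOn one_ne_zero).differentiableAt (hU.mem_nhds hp)

end Helpers

/-- A smooth solution of the spherically symmetric Einstein–Maxwell–scalar field
system on an open set `U ⊆ ℝ²`, with null coordinates `(u, v)`. -/
structure IsEMSSolution (U : Set (ℝ × ℝ)) (r Ω2 φ : ℝ × ℝ → ℝ) (e : ℝ) : Prop where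
  open_U : IsOpen U
  smooth_r : ContDiffOn ℝ (⊤ : ℕ∞) r U
  smooth_Ω2 : ContDiffOn ℝ (⊤ : ℕ∞) Ω2 U
  smooth_φ : ContDiffOn ℝ (⊤ : ℕ∞) φ U
  r_pos : ∀ p ∈ U, 0 < r p
  Ω2_pos : ∀ p ∈ U, 0 < Ω2 p
  wave_r : ∀ p ∈ U,
    pu (pv r) p
      = -Ω2 p / (4 * r p) - pu r p * pv r p / r p + Ω2 p * e ^ 2 / (4 * r p ^ 3)
  wave_Ω2 : ∀ p ∈ U,
    pu (pv (fun q => Real.log (Ω2 q))) p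
      = Ω2 p / (2 * r p ^ 2) + 2 * pu r p * pv r p / r p ^ 2
        - Ω2 p * e ^ 2 / r p ^ 4 - 2 * pu φ p * pv φ p
  raychaudhuri_u : ∀ p ∈ U,
    pu (fun q => pu r q / Ω2 q) p = -(r p / Ω2 p) * pu φ p ^ 2
  raychaudhuri_v : ∀ p ∈ U,
    pv (fun q => pv r q / Ω2 q) p = -(r p / Ω2 p) * pv φ p ^ 2
  wave_φ : ∀ p ∈ U,
    pu (pv φ) p = -(pv r p * pu φ p + pu r p * pv φ p) / r p

/-- For a smooth solution of the spherically symmetric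
Einstein–Maxwell–scalar field system on an open set `U ⊆ ℝ²` with `ν = ∂_u r`
and `λ = ∂_v r` nowhere zero, and any `C²` function `σ : U → ℝ`, the Kodama
energy current identity
`∂_u(κ⁻¹ r² (∂_v φ)² + ∂_v(σφ²)) + ∂_v(-γ⁻¹ r² (∂_u φ)² - ∂_u(σφ²)) = 0`
holds on `U`; in particular the energy current generated by the Kodama vector
field is divergence-free. -/
theorem kodama_current_divergence_free
    (U : Set (ℝ × ℝ)) (r Ω2 φ : ℝ × ℝ → ℝ) (e : ℝ)
    (hsol : IsEMSSolution U r Ω2 φ e)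
    (hν : ∀ p ∈ U, pu r p ≠ 0) (hlam : ∀ p ∈ U, pv r p ≠ 0)
    (σ : ℝ × ℝ → ℝ) (hσ : ContDiffOn ℝ 2 σ U) :
    ∀ p ∈ U,
      pu (fun q => (kap r Ω2 q)⁻¹ * r q ^ 2 * pv φ q ^ 2
            + pv (fun q' => σ q' * φ q' ^ 2) q) p
        + pv (fun q => -(gam r Ω2 q)⁻¹ * r q ^ 2 * pu φ q ^ 2
            - pu (fun q' => σ q' * φ q' ^ 2) q) p = 0 := by
  
  intro p hp
  obtain ⟨hU, hr, hW, hφ, hrpos, hWpos, _, _, hray_u, hray_v, hwφ⟩ := hsol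
  have hmem : U ∈ nhds p := hU.mem_nhds hp
  have Wne : Ω2 p ≠ 0 := ne_of_gt (hWpos p hp)
  have Rne : r p ≠ 0 := ne_of_gt (hrpos p hp)
  have hr2 : ContDiffOn ℝ 2 r U := hr.of_le (WithTop.coe_le_coe.mpr le_top)
  have hW2 : ContDiffOn ℝ 2 Ω2 U := hW.of_le (WithTop.coe_le_coe.mpr le_top)
  have hφ2 : ContDiffOn ℝ 2 φ U := hφ.of_le (WithTop.coe_le_coe.mpr le_top)
  have hs2 : ContDiffOn ℝ 2 (fun q' => σ q' * φ q' ^ 2) U := hσ.mul (hφ2.pow 2)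
  -- pointwise differentiability
  have dR : DifferentiableAt ℝ r p :=
    (hr2.differentiableOn (by norm_num)).differentiableAt hmem
  have dW : DifferentiableAt ℝ Ω2 p :=
    (hW2.differentiableOn (by norm_num)).differentiableAt hmem
  have dN : DifferentiableAt ℝ (pu r) p := pu_diffAt hU hp hr2
  have dL : DifferentiableAt ℝ (pv r) p := pv_diffAt hU hp hr2
  have dP : DifferentiableAt ℝ (pu φ) p := pu_diffAt hU hp hφ2
  have dQ : DifferentiableAt ℝ (pv φ) p := pv_diffAt hU hp hφ2
  have dpus : DifferentiableAt ℝ (pu (fun q' => σ q' * φ q' ^ 2)) p := pu_diffAt hU hp hs2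
  have dpvs : DifferentiableAt ℝ (pv (fun q' => σ q' * φ q' ^ 2)) p := pv_diffAt hU hp hs2
  have dF : DifferentiableAt ℝ (fun q => pu r q / Ω2 q) p := dN.mul (dW.inv Wne)
  have dG : DifferentiableAt ℝ (fun q => pv r q / Ω2 q) p := dL.mul (dW.inv Wne)
  have dR2 : DifferentiableAt ℝ (fun q => r q ^ 2) p := dR.pow 2
  have dP2 : DifferentiableAt ℝ (fun q => pu φ q ^ 2) p := dP.pow 2
  have dQ2 : DifferentiableAt ℝ (fun q => pv φ q ^ 2) p := dQ.pow 2
  have dA : DifferentiableAt ℝ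
      (fun q => -4 * (pu r q / Ω2 q) * (r q ^ 2 * pv φ q ^ 2)) p :=
    (dF.const_mul (-4)).mul (dR2.mul dQ2)
  have dB : DifferentiableAt ℝ
      (fun q => 4 * (pv r q / Ω2 q) * (r q ^ 2 * pu φ q ^ 2)) p :=
    (dG.const_mul 4).mul (dR2.mul dP2)
  -- replace the κ⁻¹ / γ⁻¹ expressions by polynomial-in-derivatives ones near p
  have E1 : (fun q => (kap r Ω2 q)⁻¹ * r q ^ 2 * pv φ q ^ 2
        + pv (fun q' => σ q' * φ q' ^ 2) q)
      =ᶠ[nhds p] fun q => -4 * (pu r q / Ω2 q) * (r q ^ 2 * pv φ q ^ 2)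
        + pv (fun q' => σ q' * φ q' ^ 2) q := by
    filter_upwards [hmem] with q hq
    have h1 : Ω2 q ≠ 0 := ne_of_gt (hWpos q hq)
    have h2 : pu r q ≠ 0 := hν q hq
    have h3 : (kap r Ω2 q)⁻¹ = -4 * (pu r q / Ω2 q) := by
      simp only [kap]; field_simp
    rw [h3]; ring
  have E2 : (fun q => -(gam r Ω2 q)⁻¹ * r q ^ 2 * pu φ q ^ 2
        - pu (fun q' => σ q' * φ q' ^ 2) q)
      =ᶠ[nhds p] fun q => 4 * (pv r q / Ω2 q) * (r q ^ 2 * pu φ q ^ 2)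
        - pu (fun q' => σ q' * φ q' ^ 2) q := by
    filter_upwards [hmem] with q hq
    have h1 : Ω2 q ≠ 0 := ne_of_gt (hWpos q hq)
    have h2 : pv r q ≠ 0 := hlam q hq
    have h3 : -(gam r Ω2 q)⁻¹ = 4 * (pv r q / Ω2 q) := by
      simp only [gam]; field_simp
    rw [h3]; ring
  have key1 : pu (fun q => (kap r Ω2 q)⁻¹ * r q ^ 2 * pv φ q ^ 2
        + pv (fun q' => σ q' * φ q' ^ 2) q) p
      = pu (fun q => -4 * (pu r q / Ω2 q) * (r q ^ 2 * pv φ q ^ 2)) p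
        + pu (pv (fun q' => σ q' * φ q' ^ 2)) p := by
    have h0 : pu (fun q => (kap r Ω2 q)⁻¹ * r q ^ 2 * pv φ q ^ 2
          + pv (fun q' => σ q' * φ q' ^ 2) q) p
        = pu (fun q => -4 * (pu r q / Ω2 q) * (r q ^ 2 * pv φ q ^ 2)
          + pv (fun q' => σ q' * φ q' ^ 2) q) p :=
      congrArg (fun L : (ℝ × ℝ) →L[ℝ] ℝ => L (1, 0)) E1.fderiv_eq
    rw [h0]
    exact pu_add dA dpvs
  have key2 : pv (fun q => -(gam r Ω2 q)⁻¹ * r q ^ 2 * pu φ q ^ 2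
        - pu (fun q' => σ q' * φ q' ^ 2) q) p
      = pv (fun q => 4 * (pv r q / Ω2 q) * (r q ^ 2 * pu φ q ^ 2)) p
        - pv (pu (fun q' => σ q' * φ q' ^ 2)) p := by
    have h0 : pv (fun q => -(gam r Ω2 q)⁻¹ * r q ^ 2 * pu φ q ^ 2
          - pu (fun q' => σ q' * φ q' ^ 2) q) p
        = pv (fun q => 4 * (pv r q / Ω2 q) * (r q ^ 2 * pu φ q ^ 2)
          - pu (fun q' => σ q' * φ q' ^ 2) q) p :=
      congrArg (fun L : (ℝ × ℝ) →L[ℝ] ℝ => L (0, 1)) E2.fderiv_eq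
    rw [h0]
    exact pv_sub dB dpus
  have schwσ : pu (pv (fun q' => σ q' * φ q' ^ 2)) p
      = pv (pu (fun q' => σ q' * φ q' ^ 2)) p := schwarz (hs2.contDiffAt hmem)
  have schwφ : pu (pv φ) p = pv (pu φ) p := schwarz (hφ2.contDiffAt hmem)
  -- expand the A-term
  have eA1 : pu (fun q => -4 * (pu r q / Ω2 q) * (r q ^ 2 * pv φ q ^ 2)) p
      = pu (fun q => -4 * (pu r q / Ω2 q)) p * (r p ^ 2 * pv φ p ^ 2)
        + (-4 * (pu r p / Ω2 p)) * pu (fun q => r q ^ 2 * pv φ q ^ 2) p :=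
    pu_mul (dF.const_mul (-4)) (dR2.mul dQ2)
  have eA2 : pu (fun q => -4 * (pu r q / Ω2 q)) p
      = -4 * pu (fun q => pu r q / Ω2 q) p := pu_const_mul dF (-4)
  have eA3 : pu (fun q => r q ^ 2 * pv φ q ^ 2) p
      = pu (fun q => r q ^ 2) p * pv φ p ^ 2
        + r p ^ 2 * pu (fun q => pv φ q ^ 2) p := pu_mul dR2 dQ2
  have eA4 : pu (fun q => r q ^ 2) p = 2 * r p * pu r p := pu_sq dR
  have eA5 : pu (fun q => pv φ q ^ 2) p = 2 * pv φ p * pu (pv φ) p := pu_sq dQ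
  -- expand the B-term
  have eB1 : pv (fun q => 4 * (pv r q / Ω2 q) * (r q ^ 2 * pu φ q ^ 2)) p
      = pv (fun q => 4 * (pv r q / Ω2 q)) p * (r p ^ 2 * pu φ p ^ 2)
        + (4 * (pv r p / Ω2 p)) * pv (fun q => r q ^ 2 * pu φ q ^ 2) p :=
    pv_mul (dG.const_mul 4) (dR2.mul dP2)
  have eB2 : pv (fun q => 4 * (pv r q / Ω2 q)) p
      = 4 * pv (fun q => pv r q / Ω2 q) p := pv_const_mul dG 4
  have eB3 : pv (fun q => r q ^ 2 * pu φ q ^ 2) p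
      = pv (fun q => r q ^ 2) p * pu φ p ^ 2
        + r p ^ 2 * pv (fun q => pu φ q ^ 2) p := pv_mul dR2 dP2
  have eB4 : pv (fun q => r q ^ 2) p = 2 * r p * pv r p := pv_sq dR
  have eB5 : pv (fun q => pu φ q ^ 2) p = 2 * pu φ p * pv (pu φ) p := pv_sq dP
  have hru := hray_u p hp
  have hrv := hray_v p hp
  have hwp := hwφ p hp
  rw [key1, key2, schwσ, eA1, eA2, eA3, eA4, eA5, eB1, eB2, eB3, eB4, eB5,
    ← schwφ, hru, hrv, hwp]
  field_simp
  ring
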